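/- Given two norms p₀, p₁ on ℝ^d and 0 < t < 1, define p_t(v) = p₀(v)^{1−t} p₁(v)^t. Then the dual functional p_t*(v) = sup_{w ≠ 0} |⟨v,w⟩| / p_t(w) is a norm on ℝ^d. -/

import Mathlib

open scoped RealInnerProductSpace

/-- A norm as a plain function on ℝ^d. -/
def IsNormFun {d : ℕ} (p : EuclideanSpace ℝ (Fin d) → ℝ) : Prop :=
  (∀ u v, p (u + v) ≤ p u + p v) ∧ (∀ (a : ℝ) v, p (a • v) = |a| * p v) ∧
    (∀ v, p v = 0 → v = 0)

/-- The dual functional `q*(v) = sup_{w ≠ 0} |⟨v,w⟩| / q(w)`. -/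
noncomputable def dualFn {d : ℕ} (q : EuclideanSpace ℝ (Fin d) → ℝ)
    (v : EuclideanSpace ℝ (Fin d)) : ℝ :=
  ⨆ w : {w : EuclideanSpace ℝ (Fin d) // w ≠ 0}, |⟪v, (w : EuclideanSpace ℝ (Fin d))⟫| / q w

/-! Every norm on ℝ^d dominates a multiple `c‖v‖` of the Euclidean norm (it is convex, hence
continuous, and attains a positive minimum on the unit sphere), and then so does the geometric
mean `p_t`. A lower bound `q ≥ c‖·‖` is all the dual functional needs: it keeps the supremum
finite and the weights positive, the triangle inequality and homogeneity pass through the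
supremum, and testing against `w = v` gives definiteness. -/

lemma Real.le_rpow_one_sub_mul_rpow {a x y t : ℝ} (ha : 0 ≤ a) (hax : a ≤ x) (hay : a ≤ y)
    (ht0 : 0 ≤ t) (ht1 : t ≤ 1) : a ≤ x ^ (1 - t) * y ^ t :=
  calc a = a ^ (1 - t) * a ^ t := by
        rw [← Real.rpow_add' ha (by norm_num), sub_add_cancel, Real.rpow_one]
    _ ≤ x ^ (1 - t) * y ^ t :=
        mul_le_mul (Real.rpow_le_rpow ha hax (by linarith)) (Real.rpow_le_rpow ha hay ht0)
          (by positivity) (Real.rpow_nonneg (ha.trans hax) _)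

variable {d : ℕ}

namespace IsNormFun

variable {p : EuclideanSpace ℝ (Fin d) → ℝ}

lemma map_zero (h : IsNormFun p) : p 0 = 0 := by
  simpa using h.2.1 0 0

lemma nonneg (h : IsNormFun p) (v : EuclideanSpace ℝ (Fin d)) : 0 ≤ p v := by
  have h_neg : p (-v) = p v := by simpa using h.2.1 (-1) v
  have h_tri := h.1 v (-v)
  rw [add_neg_cancel, h.map_zero, h_neg] at h_tri
  linarith

lemma convexOn (h : IsNormFun p) : ConvexOn ℝ Set.univ p := by
  refine ⟨convex_univ, fun u _ v _ a b ha hb _ => ?_⟩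
  calc p (a • u + b • v) ≤ p (a • u) + p (b • v) := h.1 _ _
    _ = a * p u + b * p v := by rw [h.2.1, h.2.1, abs_of_nonneg ha, abs_of_nonneg hb]

lemma continuous (h : IsNormFun p) : Continuous p :=
  continuousOn_univ.mp (h.convexOn.continuousOn isOpen_univ)

lemma exists_pos_mul_norm_le (h : IsNormFun p) :
    ∃ c, 0 < c ∧ ∀ v, c * ‖v‖ ≤ p v := by
  have h_pos : ∀ v ∈ Metric.sphere (0 : EuclideanSpace ℝ (Fin d)) 1, 0 < p v := fun v hv =>
    (h.nonneg v).lt_of_ne fun hpv => by simp [h.2.2 v hpv.symm] at hv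
  obtain ⟨c, hc, hc_le⟩ :=
    (isCompact_sphere 0 1).exists_forall_le' h.continuous.continuousOn h_pos
  refine ⟨c, hc, fun v => ?_⟩
  rcases eq_or_ne v 0 with rfl | hv
  · simp [h.map_zero]
  have hv' : 0 < ‖v‖ := norm_pos_iff.mpr hv
  have h_unit : ‖v‖⁻¹ • v ∈ Metric.sphere (0 : EuclideanSpace ℝ (Fin d)) 1 := by
    simp [norm_smul, hv'.ne']
  calc c * ‖v‖ ≤ p (‖v‖⁻¹ • v) * ‖v‖ := by gcongr; exact hc_le _ h_unit
    _ = p v := by rw [h.2.1, abs_inv, abs_norm]; field_simp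

end IsNormFun

section dualFn

variable {q : EuclideanSpace ℝ (Fin d) → ℝ} {c : ℝ}

lemma pos_of_mul_norm_le (hc : 0 < c) (hq : ∀ w, c * ‖w‖ ≤ q w)
    {w : EuclideanSpace ℝ (Fin d)} (hw : w ≠ 0) : 0 < q w :=
  (mul_pos hc (norm_pos_iff.mpr hw)).trans_le (hq w)

lemma bddAbove_range_dualFn (hc : 0 < c) (hq : ∀ w, c * ‖w‖ ≤ q w)
    (v : EuclideanSpace ℝ (Fin d)) :
    BddAbove (Set.range fun w : {w : EuclideanSpace ℝ (Fin d) // w ≠ 0} =>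
      |⟪v, (w : EuclideanSpace ℝ (Fin d))⟫| / q w) := by
  refine ⟨‖v‖ / c, ?_⟩
  rintro _ ⟨⟨w, hw⟩, rfl⟩
  have hw' : 0 < ‖w‖ := norm_pos_iff.mpr hw
  calc |⟪v, w⟫| / q w ≤ ‖v‖ * ‖w‖ / (c * ‖w‖) :=
        div_le_div₀ (by positivity) (abs_real_inner_le_norm v w) (by positivity) (hq w)
    _ = ‖v‖ / c := mul_div_mul_right _ _ hw'.ne'

lemma le_dualFn (hc : 0 < c) (hq : ∀ w, c * ‖w‖ ≤ q w) (v : EuclideanSpace ℝ (Fin d))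
    {w : EuclideanSpace ℝ (Fin d)} (hw : w ≠ 0) : |⟪v, w⟫| / q w ≤ dualFn q v :=
  le_ciSup (bddAbove_range_dualFn hc hq v) ⟨w, hw⟩

lemma dualFn_nonneg (hc : 0 < c) (hq : ∀ w, c * ‖w‖ ≤ q w) (v : EuclideanSpace ℝ (Fin d)) :
    0 ≤ dualFn q v :=
  Real.iSup_nonneg fun w => div_nonneg (abs_nonneg _) (pos_of_mul_norm_le hc hq w.2).le

theorem isNormFun_dualFn (hc : 0 < c) (hq : ∀ w, c * ‖w‖ ≤ q w) : IsNormFun (dualFn q) := by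
  refine ⟨fun u v => ?_, fun a v => ?_, fun v hv => ?_⟩
  · refine Real.iSup_le (fun ⟨w, hw⟩ => ?_)
      (add_nonneg (dualFn_nonneg hc hq u) (dualFn_nonneg hc hq v))
    have hqw := pos_of_mul_norm_le hc hq hw
    calc |⟪u + v, w⟫| / q w ≤ |⟪u, w⟫| / q w + |⟪v, w⟫| / q w := by
          rw [← add_div, inner_add_left]; gcongr; exact abs_add_le _ _
      _ ≤ dualFn q u + dualFn q v := add_le_add (le_dualFn hc hq u hw) (le_dualFn hc hq v hw)
  · simp only [dualFn, real_inner_smul_left, abs_mul, mul_div_assoc]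
    exact (Real.mul_iSup_of_nonneg (abs_nonneg a) _).symm
  · by_contra hv0
    have hv' : 0 < ‖v‖ := norm_pos_iff.mpr hv0
    have hqv := pos_of_mul_norm_le hc hq hv0
    have h_self : 0 < |⟪v, v⟫| / q v := by
      rw [real_inner_self_eq_norm_sq]; positivity
    linarith [le_dualFn hc hq v hv0]

end dualFn

/-- For norms `p₀, p₁` on ℝ^d and `0 < t < 1`, the dual functional of the geometric
mean `p_t(v) = p₀(v)^{1-t} p₁(v)^t` is a norm on ℝ^d. -/
theorem dual_of_geometric_mean_is_norm (d : ℕ)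
    (p₀ p₁ : EuclideanSpace ℝ (Fin d) → ℝ) (h₀ : IsNormFun p₀) (h₁ : IsNormFun p₁)
    (t : ℝ) (ht0 : 0 < t) (ht1 : t < 1) :
    IsNormFun (dualFn (fun v => p₀ v ^ (1 - t) * p₁ v ^ t)) := by
  obtain ⟨c₀, hc₀, hp₀⟩ := h₀.exists_pos_mul_norm_le
  obtain ⟨c₁, hc₁, hp₁⟩ := h₁.exists_pos_mul_norm_le
  refine isNormFun_dualFn (lt_min hc₀ hc₁) fun v => ?_
  exact Real.le_rpow_one_sub_mul_rpow (by positivity)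
    ((mul_le_mul_of_nonneg_right (min_le_left _ _) (norm_nonneg v)).trans (hp₀ v))
    ((mul_le_mul_of_nonneg_right (min_le_right _ _) (norm_nonneg v)).trans (hp₁ v)) ht0.le ht1.le
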